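/- Let k, m be positive integers and let f : {0,1}^k → {0,1}^m be any Boolean function. Then there exist a natural number a and a multilinear polynomial H of degree at most 2 in k + m + a variables such that H(x, y, w) ≥ 0 for all x ∈ {0,1}^k, y ∈ {0,1}^m, w ∈ {0,1}^a, and for all x ∈ {0,1}^k and y ∈ {0,1}^m: there exists w ∈ {0,1}^a with H(x, y, w) = 0 if and only if y = f(x). Moreover H(x, y, w) ≥ 1 whenever H(x, y, w) ≠ 0. -/
import Mathlib

def b2r (b : Bool) : ℝ := if b then 1 else 0

def IsMultilinearDeg (d n : ℕ) (g : (Fin n → ℝ) → ℝ) : Prop :=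
  ∃ c : Finset (Fin n) → ℝ, (∀ S, d < S.card → c S = 0) ∧
    ∀ v, g v = ∑ S : Finset (Fin n), c S * ∏ i ∈ S, v i

lemma ML_const {d n : ℕ} (c : ℝ) : IsMultilinearDeg d n (fun _ => c) := by
  refine ⟨fun S => if S = ∅ then c else 0, ?_, ?_⟩
  · intro S hS
    dsimp only
    rw [if_neg]; rintro rfl; simp at hS
  · intro v
    rw [Finset.sum_eq_single ∅]
    · simp
    · intro S _ hS; simp [hS]
    · simp

lemma ML_single {d n : ℕ} (hd : 1 ≤ d) (i : Fin n) :
    IsMultilinearDeg d n (fun v => v i) := by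
  refine ⟨fun S => if S = {i} then 1 else 0, ?_, ?_⟩
  · intro S hS
    dsimp only
    rw [if_neg]; rintro rfl; simp at hS; omega
  · intro v
    rw [Finset.sum_eq_single {i}]
    · simp
    · intro S _ hS; simp [hS]
    · simp

lemma ML_pair {d n : ℕ} (hd : 2 ≤ d) {i j : Fin n} (hij : i ≠ j) :
    IsMultilinearDeg d n (fun v => v i * v j) := by
  refine ⟨fun S => if S = {i, j} then 1 else 0, ?_, ?_⟩
  · intro S hS
    dsimp only
    rw [if_neg]; rintro rfl
    have : ({i, j} : Finset (Fin n)).card ≤ 2 :=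
      (Finset.card_insert_le _ _).trans (by simp)
    omega
  · intro v
    rw [Finset.sum_eq_single {i, j}]
    · simp [Finset.prod_pair hij]
    · intro S _ hS; simp [hS]
    · simp

lemma ML_add {d n : ℕ} {g h : (Fin n → ℝ) → ℝ}
    (hg : IsMultilinearDeg d n g) (hh : IsMultilinearDeg d n h) :
    IsMultilinearDeg d n (fun v => g v + h v) := by
  obtain ⟨c1, hc1, he1⟩ := hg
  obtain ⟨c2, hc2, he2⟩ := hh
  refine ⟨fun S => c1 S + c2 S, fun S hS => by dsimp only; rw [hc1 S hS, hc2 S hS]; ring, fun v => ?_⟩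
  simp [he1, he2, add_mul, Finset.sum_add_distrib]

lemma ML_smul {d n : ℕ} (r : ℝ) {g : (Fin n → ℝ) → ℝ}
    (hg : IsMultilinearDeg d n g) :
    IsMultilinearDeg d n (fun v => r * g v) := by
  obtain ⟨c1, hc1, he1⟩ := hg
  refine ⟨fun S => r * c1 S, fun S hS => by dsimp only; rw [hc1 S hS]; ring, fun v => ?_⟩
  simp [he1, Finset.mul_sum, mul_assoc]

lemma ML_sub {d n : ℕ} {g h : (Fin n → ℝ) → ℝ}
    (hg : IsMultilinearDeg d n g) (hh : IsMultilinearDeg d n h) :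
    IsMultilinearDeg d n (fun v => g v - h v) := by
  have := ML_add hg (ML_smul (-1) hh)
  simpa [sub_eq_add_neg] using this

lemma ML_fsum {d n : ℕ} {ι : Type*} (t : Finset ι) (g : ι → (Fin n → ℝ) → ℝ)
    (h : ∀ i ∈ t, IsMultilinearDeg d n (g i)) :
    IsMultilinearDeg d n (fun v => ∑ i ∈ t, g i v) := by
  induction t using Finset.cons_induction with
  | empty => simpa using ML_const (d := d) (n := n) 0
  | cons a t ha ih =>
      simp only [Finset.sum_cons]
      exact ML_add (h a (Finset.mem_cons_self a t))
        (ih fun i hi => h i (Finset.mem_cons_of_mem hi))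

section Construction

variable (k m : ℕ) (f : (Fin k → Bool) → (Fin m → Bool))


/-- number of ancillas -/
def anc (k : ℕ) : ℕ := Fintype.card (Fin k → Bool)

noncomputable def eqv (k : ℕ) : (Fin k → Bool) ≃ Fin (anc k) := Fintype.equivFin _

def ix (i : Fin k) : Fin (k + m + anc k) := Fin.castAdd (anc k) (Fin.castAdd m i)
def iy (j : Fin m) : Fin (k + m + anc k) := Fin.castAdd (anc k) (Fin.natAdd k j)
noncomputable def iw (s : Fin k → Bool) : Fin (k + m + anc k) :=
  Fin.natAdd (k + m) (eqv k s)

lemma iw_ne_iw {s t : Fin k → Bool} (h : s ≠ t) : iw k m s ≠ iw k m t := by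
  simp only [iw, ne_eq, Fin.ext_iff, Fin.natAdd, Fin.val_fin_lt]
  intro hc
  exact h ((eqv k).injective (Fin.ext (by omega)))

lemma iw_ne_ix (s : Fin k → Bool) (i : Fin k) : iw k m s ≠ ix k m i := by
  simp only [iw, ix, ne_eq, Fin.ext_iff, Fin.natAdd, Fin.castAdd, Fin.castLE]
  have := i.isLt
  omega

lemma iw_ne_iy (s : Fin k → Bool) (j : Fin m) : iw k m s ≠ iy k m j := by
  simp only [iw, iy, ne_eq, Fin.ext_iff, Fin.natAdd, Fin.castAdd, Fin.castLE]
  have := j.isLt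
  omega

noncomputable def Ham : (Fin (k + m + anc k) → ℝ) → ℝ := fun v =>
  ((∑ s, ∑ t ∈ Finset.univ.erase s, v (iw k m s) * v (iw k m t))
    - (∑ s, v (iw k m s)) + 1)
  + (∑ s, ∑ i, (if s i then v (iw k m s) - v (iw k m s) * v (ix k m i)
      else v (iw k m s) * v (ix k m i)))
  + (∑ s, ∑ j, (if f s j then v (iw k m s) - v (iw k m s) * v (iy k m j)
      else v (iw k m s) * v (iy k m j)))

lemma Ham_ML : IsMultilinearDeg 2 (k + m + anc k) (Ham k m f) := by
  apply ML_add
  apply ML_add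
  · apply ML_add
    · apply ML_sub
      · apply ML_fsum
        intro s _
        apply ML_fsum
        intro t ht
        exact ML_pair le_rfl (iw_ne_iw k m (Finset.ne_of_mem_erase ht).symm)
      · exact ML_fsum _ _ fun s _ => ML_single (by norm_num) _
    · exact ML_const 1
  · apply ML_fsum
    intro s _
    apply ML_fsum
    intro i _
    cases hsi : s i
    · simp only [Bool.false_eq_true, if_false]
      exact ML_pair le_rfl (iw_ne_ix k m s i)
    · simp only [if_true]
      exact ML_sub (ML_single (by norm_num) _) (ML_pair le_rfl (iw_ne_ix k m s i))
  · apply ML_fsum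
    intro s _
    apply ML_fsum
    intro j _
    cases hsj : f s j
    · simp only [Bool.false_eq_true, if_false]
      exact ML_pair le_rfl (iw_ne_iy k m s j)
    · simp only [if_true]
      exact ML_sub (ML_single (by norm_num) _) (ML_pair le_rfl (iw_ne_iy k m s j))

end Construction

section Eval

variable (k m : ℕ) (f : (Fin k → Bool) → (Fin m → Bool))


lemma sq_sum_aux {α : Type*} [Fintype α] [DecidableEq α] (χ : α → ℝ) (hχ : ∀ s, χ s * χ s = χ s) :
    (∑ s, ∑ t ∈ Finset.univ.erase s, χ s * χ t) - (∑ s, χ s) + 1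
      = ((∑ s, χ s) - 1) ^ 2 := by
  have h2 : ∀ s, χ s * ∑ t, χ t = χ s + ∑ t ∈ Finset.univ.erase s, χ s * χ t := by
    intro s
    rw [Finset.mul_sum, ← Finset.add_sum_erase _ _ (Finset.mem_univ s), hχ s]
  have h1 : ((∑ s, χ s)) ^ 2 = (∑ s, χ s) + ∑ s, ∑ t ∈ Finset.univ.erase s, χ s * χ t := by
    rw [sq, Finset.sum_mul]
    simp only [h2, Finset.sum_add_distrib]
  nlinarith [h1]

noncomputable def N1 (w : Fin (anc k) → Bool) : ℕ :=
  (Finset.univ.filter fun s : Fin k → Bool => w (eqv k s) = true).card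

noncomputable def N2 (x : Fin k → Bool) (w : Fin (anc k) → Bool) : ℕ :=
  ∑ s : Fin k → Bool, ∑ i, if w (eqv k s) = true ∧ x i ≠ s i then 1 else 0

noncomputable def N3 (y : Fin m → Bool) (w : Fin (anc k) → Bool) : ℕ :=
  ∑ s : Fin k → Bool, ∑ j, if w (eqv k s) = true ∧ y j ≠ f s j then 1 else 0

set_option maxHeartbeats 800000 in
lemma Ham_eval (x : Fin k → Bool) (y : Fin m → Bool) (w : Fin (anc k) → Bool) :
    Ham k m f (Fin.append (Fin.append (fun i => b2r (x i)) (fun j => b2r (y j)))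
        (fun l => b2r (w l)))
      = ((N1 k w : ℝ) - 1) ^ 2 + (N2 k x w : ℝ) + (N3 k m f y w : ℝ) := by
  set v : Fin (k + m + anc k) → ℝ :=
    Fin.append (Fin.append (fun i => b2r (x i)) (fun j => b2r (y j)))
      (fun l => b2r (w l)) with hv
  have hvx : ∀ i, v (ix k m i) = b2r (x i) := by
    intro i; simp [hv, ix, Fin.append_left]
  have hvy : ∀ j, v (iy k m j) = b2r (y j) := by
    intro j; simp [hv, iy, Fin.append_left, Fin.append_right]
  have hvw : ∀ s, v (iw k m s) = b2r (w (eqv k s)) := by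
    intro s; simp [hv, iw, Fin.append_right]
  simp only [Ham, hvx, hvy, hvw]
  have hA : (∑ s : Fin k → Bool, ∑ t ∈ Finset.univ.erase s,
        b2r (w (eqv k s)) * b2r (w (eqv k t)))
      - (∑ s : Fin k → Bool, b2r (w (eqv k s))) + 1
      = ((∑ s : Fin k → Bool, b2r (w (eqv k s))) - 1) ^ 2 :=
    sq_sum_aux _ (fun s => by cases h : w (eqv k s) <;> simp [b2r, h])
  rw [hA]
  have hsum : (∑ s : Fin k → Bool, b2r (w (eqv k s))) = (N1 k w : ℝ) := by
    simp only [b2r, N1]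
    rw [Finset.sum_boole]
  rw [hsum]
  have hB : ∀ s : Fin k → Bool, ∀ i : Fin k,
      (if s i then b2r (w (eqv k s)) - b2r (w (eqv k s)) * b2r (x i)
        else b2r (w (eqv k s)) * b2r (x i))
      = if w (eqv k s) = true ∧ x i ≠ s i then (1 : ℝ) else 0 := by
    intro s i
    cases hsi : s i <;> cases hxi : x i <;> cases hw : w (eqv k s) <;>
      simp [b2r, hsi, hxi, hw]
  have hC : ∀ s : Fin k → Bool, ∀ j : Fin m,
      (if f s j then b2r (w (eqv k s)) - b2r (w (eqv k s)) * b2r (y j)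
        else b2r (w (eqv k s)) * b2r (y j))
      = if w (eqv k s) = true ∧ y j ≠ f s j then (1 : ℝ) else 0 := by
    intro s j
    cases hsj : f s j <;> cases hyj : y j <;> cases hw : w (eqv k s) <;>
      simp [b2r, hsj, hyj, hw]
  simp only [hB, hC, N2, N3]
  push_cast
  ring

end Eval

section Spectrum

variable (k m : ℕ) (f : (Fin k → Bool) → (Fin m → Bool))

lemma energy_int (x : Fin k → Bool) (y : Fin m → Bool) (w : Fin (anc k) → Bool) :
    ((N1 k w : ℝ) - 1) ^ 2 + (N2 k x w : ℝ) + (N3 k m f y w : ℝ)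
      = ((((N1 k w : ℤ) - 1) ^ 2 + (N2 k x w : ℤ) + (N3 k m f y w : ℤ) : ℤ) : ℝ) := by
  push_cast; ring

lemma energy_zero_iff (x : Fin k → Bool) (y : Fin m → Bool) (w : Fin (anc k) → Bool) :
    ((N1 k w : ℝ) - 1) ^ 2 + (N2 k x w : ℝ) + (N3 k m f y w : ℝ) = 0
      ↔ N1 k w = 1 ∧ N2 k x w = 0 ∧ N3 k m f y w = 0 := by
  rw [energy_int]
  rw [show ((0 : ℝ) = ((0 : ℤ) : ℝ)) by norm_cast, Int.cast_inj]
  constructor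
  · intro h
    have hq : (0 : ℤ) ≤ ((N1 k w : ℤ) - 1) ^ 2 := sq_nonneg _
    have h2 : (0 : ℤ) ≤ (N2 k x w : ℤ) := Int.natCast_nonneg _
    have h3 : (0 : ℤ) ≤ (N3 k m f y w : ℤ) := Int.natCast_nonneg _
    have hq0 : ((N1 k w : ℤ) - 1) ^ 2 = 0 := by linarith
    have h20 : (N2 k x w : ℤ) = 0 := by linarith
    have h30 : (N3 k m f y w : ℤ) = 0 := by linarith
    have : (N1 k w : ℤ) - 1 = 0 := by
      exact pow_eq_zero_iff (by norm_num) |>.mp hq0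
    refine ⟨by omega, by exact_mod_cast h20, by exact_mod_cast h30⟩
  · rintro ⟨h1, h2, h3⟩
    rw [h1, h2, h3]; norm_num

lemma eq_of_energy_zero (x : Fin k → Bool) (y : Fin m → Bool) (w : Fin (anc k) → Bool)
    (h : ((N1 k w : ℝ) - 1) ^ 2 + (N2 k x w : ℝ) + (N3 k m f y w : ℝ) = 0) :
    y = f x := by
  obtain ⟨h1, h2, h3⟩ := (energy_zero_iff k m f x y w).mp h
  obtain ⟨s0, hs0⟩ := Finset.card_eq_one.mp h1
  have hmem : ∀ s : Fin k → Bool, w (eqv k s) = true ↔ s = s0 := by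
    intro s
    constructor
    · intro hs
      have : s ∈ (Finset.univ.filter fun s : Fin k → Bool => w (eqv k s) = true) := by
        simp [hs]
      rw [hs0] at this
      simpa using this
    · intro hs
      have hmem : s ∈ ({s0} : Finset (Fin k → Bool)) := by simp [hs]
      rw [← hs0] at hmem
      simpa using hmem
  have hN2 : ∀ s : Fin k → Bool, ∀ i : Fin k,
      ¬(w (eqv k s) = true ∧ x i ≠ s i) := by
    intro s i
    have := (Finset.sum_eq_zero_iff.mp h2) s (Finset.mem_univ s)
    have := (Finset.sum_eq_zero_iff.mp this) i (Finset.mem_univ i)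
    simpa [ite_eq_right_iff] using this
  have hN3 : ∀ s : Fin k → Bool, ∀ j : Fin m,
      ¬(w (eqv k s) = true ∧ y j ≠ f s j) := by
    intro s j
    have := (Finset.sum_eq_zero_iff.mp h3) s (Finset.mem_univ s)
    have := (Finset.sum_eq_zero_iff.mp this) j (Finset.mem_univ j)
    simpa [ite_eq_right_iff] using this
  have hw0 : w (eqv k s0) = true := (hmem s0).mpr rfl
  have hx : x = s0 := by
    funext i
    by_contra hne
    exact hN2 s0 i ⟨hw0, hne⟩
  funext j
  by_contra hne
  exact hN3 s0 j ⟨hw0, by rw [← hx]; exact hne⟩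

lemma energy_zero_of_eq (x : Fin k → Bool) :
    ∃ w : Fin (anc k) → Bool,
      ((N1 k w : ℝ) - 1) ^ 2 + (N2 k x w : ℝ) + (N3 k m f (f x) w : ℝ) = 0 := by
  refine ⟨fun l => decide ((eqv k).symm l = x), ?_⟩
  have hws : ∀ s : Fin k → Bool,
      (decide ((eqv k).symm (eqv k s) = x)) = decide (s = x) := by
    intro s; rw [Equiv.symm_apply_apply]
  rw [energy_zero_iff]
  refine ⟨?_, ?_, ?_⟩
  · unfold N1
    simp only [hws, decide_eq_true_eq]
    rw [Finset.filter_eq']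
    simp
  · unfold N2
    rw [Finset.sum_eq_zero]
    intro s _
    rw [Finset.sum_eq_zero]
    intro i _
    simp only [hws, decide_eq_true_eq, ite_eq_right_iff]
    rintro ⟨rfl, hne⟩
    exact absurd rfl hne
  · unfold N3
    rw [Finset.sum_eq_zero]
    intro s _
    rw [Finset.sum_eq_zero]
    intro j _
    simp only [hws, decide_eq_true_eq, ite_eq_right_iff]
    rintro ⟨rfl, hne⟩
    exact absurd rfl hne

lemma energy_gap (x : Fin k → Bool) (y : Fin m → Bool) (w : Fin (anc k) → Bool)
    (h : ((N1 k w : ℝ) - 1) ^ 2 + (N2 k x w : ℝ) + (N3 k m f y w : ℝ) ≠ 0) :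
    1 ≤ ((N1 k w : ℝ) - 1) ^ 2 + (N2 k x w : ℝ) + (N3 k m f y w : ℝ) := by
  rw [energy_int] at h ⊢
  set Z : ℤ := ((N1 k w : ℤ) - 1) ^ 2 + (N2 k x w : ℤ) + (N3 k m f y w : ℤ) with hZ
  have hZ0 : (0 : ℤ) ≤ Z := by
    have := sq_nonneg ((N1 k w : ℤ) - 1)
    have := Int.natCast_nonneg (N2 k x w)
    have := Int.natCast_nonneg (N3 k m f y w)
    rw [hZ]; linarith
  have hZne : Z ≠ 0 := fun hc => h (by rw [hc]; norm_num)
  have : (1 : ℤ) ≤ Z := by omega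
  exact_mod_cast this

end Spectrum

theorem switching_function_two_local_embedding
    (k m : ℕ) (hk : 0 < k) (hm : 0 < m)
    (f : (Fin k → Bool) → (Fin m → Bool)) :
    ∃ (a : ℕ) (H : (Fin (k + m + a) → ℝ) → ℝ),
      IsMultilinearDeg 2 (k + m + a) H ∧
      (∀ (x : Fin k → Bool) (y : Fin m → Bool) (w : Fin a → Bool),
        0 ≤ H (Fin.append (Fin.append (fun i => b2r (x i)) (fun j => b2r (y j)))
              (fun l => b2r (w l)))) ∧
      (∀ (x : Fin k → Bool) (y : Fin m → Bool),
        (∃ w : Fin a → Bool,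
          H (Fin.append (Fin.append (fun i => b2r (x i)) (fun j => b2r (y j)))
              (fun l => b2r (w l))) = 0) ↔ y = f x) ∧
      (∀ (x : Fin k → Bool) (y : Fin m → Bool) (w : Fin a → Bool),
        H (Fin.append (Fin.append (fun i => b2r (x i)) (fun j => b2r (y j)))
            (fun l => b2r (w l))) ≠ 0 →
        1 ≤ H (Fin.append (Fin.append (fun i => b2r (x i)) (fun j => b2r (y j)))
              (fun l => b2r (w l)))) := by
  refine ⟨anc k, Ham k m f, Ham_ML k m f, ?_, ?_, ?_⟩
  · intro x y w
    rw [Ham_eval]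
    positivity
  · intro x y
    constructor
    · rintro ⟨w, hw⟩
      rw [Ham_eval] at hw
      exact eq_of_energy_zero k m f x y w hw
    · rintro rfl
      obtain ⟨w, hw⟩ := energy_zero_of_eq k m f x
      exact ⟨w, by rw [Ham_eval]; exact hw⟩
  · intro x y w h
    rw [Ham_eval] at h ⊢
    exact energy_gap k m f x y w h
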